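/- arXiv:1409.1553 — 3 statements merged into one kernel-verified Lean document; each statement's English description precedes it below -/
import Mathlib

section
/- Let f : A → B, α : A → C, β : B → D, g : C → D be a commuting square of ℤ-indexed chain complexes of R-modules (β ∘ f = g ∘ α). Suppose B and C are acyclic (H_k(B) = 0 and H_k(C) = 0 for all k) and the iterated-fiber complex of the square is acyclic. Then H_k(A) ≅ H_{k+1}(D) for every integer k. -/
variable {R : Type} [CommRing R]

section Defs

variable {M N : ℤ → Type} [∀ k, AddCommGroup (M k)] [∀ k, Module R (M k)]
  [∀ k, AddCommGroup (N k)] [∀ k, Module R (N k)]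

/-- Transport an element along an equality of degrees. -/
def dcast {a b : ℤ} (h : a = b) : M a →ₗ[R] M b where
  toFun x := h ▸ x
  map_add' := by subst h; intros; rfl
  map_smul' := by subst h; intros; rfl

/-- `d` is the differential of a chain complex: `d ∘ d = 0`. -/
def IsChainComplex (d : ∀ k, M k →ₗ[R] M (k - 1)) : Prop :=
  ∀ k, (d (k - 1)).comp (d k) = 0

/-- `φ` is a chain map from `(M, dM)` to `(N, dN)`. -/
def IsChainMap (dM : ∀ k, M k →ₗ[R] M (k - 1)) (dN : ∀ k, N k →ₗ[R] N (k - 1))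
    (φ : ∀ k, M k →ₗ[R] N k) : Prop :=
  ∀ k, (φ (k - 1)).comp (dM k) = (dN k).comp (φ k)

/-- The complexes `(M, dM)` and `(N, dN)` are isomorphic as chain complexes. -/
def ChainIso (dM : ∀ k, M k →ₗ[R] M (k - 1)) (dN : ∀ k, N k →ₗ[R] N (k - 1)) : Prop :=
  ∃ e : ∀ k, M k ≃ₗ[R] N k,
    ∀ k, ((e (k - 1)).toLinearMap).comp (dM k) = (dN k).comp (e k).toLinearMap

end Defs

section Hofib

variable {U V : ℤ → Type} [∀ k, AddCommGroup (U k)] [∀ k, Module R (U k)]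
  [∀ k, AddCommGroup (V k)] [∀ k, Module R (V k)]

/-- The differential of the explicit homotopy fiber `hofib(f)_k = U_k × V_{k+1}`,
`d (u, v) = (d u, -f(u) - d v)`. -/
def hofibD (dU : ∀ k, U k →ₗ[R] U (k - 1)) (dV : ∀ k, V k →ₗ[R] V (k - 1))
    (f : ∀ k, U k →ₗ[R] V k) (k : ℤ) :
    (U k × V (k + 1)) →ₗ[R] (U (k - 1) × V (k - 1 + 1)) :=
  LinearMap.prod ((dU k).comp (LinearMap.fst R (U k) (V (k + 1))))
    (- (dcast (show k = k - 1 + 1 by ring)).comp ((f k).comp (LinearMap.fst R (U k) (V (k + 1))))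
      - (dcast (show k + 1 - 1 = k - 1 + 1 by ring)).comp
          ((dV (k + 1)).comp (LinearMap.snd R (U k) (V (k + 1)))))

end Hofib

section Sq

variable (A B C D : ℤ → Type)
  [∀ k, AddCommGroup (A k)] [∀ k, Module R (A k)]
  [∀ k, AddCommGroup (B k)] [∀ k, Module R (B k)]
  [∀ k, AddCommGroup (C k)] [∀ k, Module R (C k)]
  [∀ k, AddCommGroup (D k)] [∀ k, Module R (D k)]

/-- projection onto the `A`-component of `A_k × B_{k+1} × C_{k+1} × D_{k+2}`. -/
def qA (k : ℤ) : (A k × B (k + 1) × C (k + 1) × D (k + 2)) →ₗ[R] A k :=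
  LinearMap.fst R _ _

/-- projection onto the `B`-component. -/
def qB (k : ℤ) : (A k × B (k + 1) × C (k + 1) × D (k + 2)) →ₗ[R] B (k + 1) :=
  (LinearMap.fst R _ _).comp (LinearMap.snd R (A k) _)

/-- projection onto the `C`-component. -/
def qC (k : ℤ) : (A k × B (k + 1) × C (k + 1) × D (k + 2)) →ₗ[R] C (k + 1) :=
  (LinearMap.fst R _ _).comp ((LinearMap.snd R (B (k + 1)) _).comp (LinearMap.snd R (A k) _))

/-- projection onto the `D`-component. -/
def qD (k : ℤ) : (A k × B (k + 1) × C (k + 1) × D (k + 2)) →ₗ[R] D (k + 2) :=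
  (LinearMap.snd R (C (k + 1)) _).comp
    ((LinearMap.snd R (B (k + 1)) _).comp (LinearMap.snd R (A k) _))

variable {A B C D}

/-- The differential of the iterated-fiber complex of a commuting square
`f : A → B`, `α : A → C`, `β : B → D`, `g : C → D`, with degree-`k` part
`A_k × B_{k+1} × C_{k+1} × D_{k+2}` and
`d (a, b, c, d) = (d a, -f(a) - d b, -α(a) - d c, -β(b) + g(c) + d d)`. -/
def SqD (dA : ∀ k, A k →ₗ[R] A (k - 1)) (dB : ∀ k, B k →ₗ[R] B (k - 1))
    (dC : ∀ k, C k →ₗ[R] C (k - 1)) (dD : ∀ k, D k →ₗ[R] D (k - 1))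
    (f : ∀ k, A k →ₗ[R] B k) (α : ∀ k, A k →ₗ[R] C k)
    (β : ∀ k, B k →ₗ[R] D k) (g : ∀ k, C k →ₗ[R] D k) (k : ℤ) :
    (A k × B (k + 1) × C (k + 1) × D (k + 2)) →ₗ[R]
      (A (k - 1) × B (k - 1 + 1) × C (k - 1 + 1) × D (k - 1 + 2)) :=
  LinearMap.prod ((dA k).comp (qA A B C D k)) <|
    LinearMap.prod
      (- (dcast (show k = k - 1 + 1 by ring)).comp ((f k).comp (qA A B C D k))
        - (dcast (show k + 1 - 1 = k - 1 + 1 by ring)).comp ((dB (k + 1)).comp (qB A B C D k))) <|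
      LinearMap.prod
        (- (dcast (show k = k - 1 + 1 by ring)).comp ((α k).comp (qA A B C D k))
          - (dcast (show k + 1 - 1 = k - 1 + 1 by ring)).comp ((dC (k + 1)).comp (qC A B C D k)))
        (- (dcast (show k + 1 = k - 1 + 2 by ring)).comp ((β (k + 1)).comp (qB A B C D k))
          + (dcast (show k + 1 = k - 1 + 2 by ring)).comp ((g (k + 1)).comp (qC A B C D k))
          + (dcast (show k + 2 - 1 = k - 1 + 2 by ring)).comp ((dD (k + 2)).comp (qD A B C D k)))

end Sq

section Homology

variable {M : ℤ → Type} [∀ k, AddCommGroup (M k)] [∀ k, Module R (M k)]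

/-- The boundaries-producing map `M_{k+1} → M_k`. -/
def bdry (d : ∀ k, M k →ₗ[R] M (k - 1)) (k : ℤ) : M (k + 1) →ₗ[R] M k :=
  (dcast (R := R) (M := M) (show k + 1 - 1 = k by ring)).comp (d (k + 1))

/-- Homology of `(M, d)` in degree `k`: cycles modulo boundaries. -/
abbrev homologyAt (d : ∀ k, M k →ₗ[R] M (k - 1)) (k : ℤ) :=
  ↥(LinearMap.ker (d k)) ⧸ Submodule.comap (LinearMap.ker (d k)).subtype
    (LinearMap.range (bdry d k))

/-- A complex is acyclic when all its homology modules vanish. -/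
def IsAcyclic (d : ∀ k, M k →ₗ[R] M (k - 1)) : Prop :=
  ∀ k, Subsingleton (homologyAt (R := R) d k)

end Homology

/-!
Let `Z_k` (`squareCycles`) be the module of triples `(a, b, c) ∈ A_k × B_{k+1} × C_{k+1}`
with `d a = 0`, `d b = -f a` and `d c = -α a`. Both homologies are quotients of `Z_k`. The map
`(a, b, c) ↦ [a] ∈ H_k(A)` is onto because `f a` and `α a` are cycles of the acyclic `B` and
`C`; the map `(a, b, c) ↦ [-β b + g c] ∈ H_{k+1}(D)` (a cycle since `β f = g α`) is onto
because a cycle `z` of `D`, seen as the cycle `(0, 0, 0, z)` of the acyclic iterated fiber,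
bounds some `(a, b, c, d)`. The two maps have the same kernel: if `a = d a'`, then `b + f a'`
and `c + α a'` bound some `b'` and `c'`, and `-β b + g c = d (-β b' + g c')`; conversely, if
`-β b + g c = d e`, then `(a, b, c, -e)` is a cycle, hence a boundary, of the iterated fiber,
so `a` is a boundary.
-/

section Transport

variable {M N : ℤ → Type} [∀ k, AddCommGroup (M k)] [∀ k, Module R (M k)]
  [∀ k, AddCommGroup (N k)] [∀ k, Module R (N k)]

lemma dcast_dcast {a b c : ℤ} (h₁ : a = b) (h₂ : b = c) (x : M a) :
    dcast (R := R) h₂ (dcast (R := R) h₁ x) = dcast (R := R) (h₁.trans h₂) x := by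
  subst h₁; rfl

lemma dcast_self {a : ℤ} (h : a = a) (x : M a) : dcast (R := R) h x = x := rfl

lemma dcast_inj {a b : ℤ} (h : a = b) {x y : M a} :
    dcast (R := R) h x = dcast (R := R) h y ↔ x = y := by
  subst h; rfl

lemma dcast_eq_zero_iff {a b : ℤ} (h : a = b) {x : M a} : dcast (R := R) h x = 0 ↔ x = 0 := by
  subst h; rfl

lemma map_dcast (φ : ∀ k, M k →ₗ[R] N k) {a b : ℤ} (h : a = b) (x : M a) :
    φ b (dcast (R := R) h x) = dcast (R := R) h (φ a x) := by
  subst h; rfl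

lemma d_dcast (d : ∀ k, M k →ₗ[R] M (k - 1)) {a b : ℤ} (h : a = b) (h' : a - 1 = b - 1)
    (x : M a) : d b (dcast (R := R) h x) = dcast (R := R) h' (d a x) := by
  subst h; rfl

lemma dcast_prod_fst {a b : ℤ} (h : a = b) (x : M a × N a) :
    (dcast (R := R) (M := fun k => M k × N k) h x).1 = dcast (R := R) h x.1 := by
  subst h; rfl

end Transport

section Homology

variable {M N : ℤ → Type} [∀ k, AddCommGroup (M k)] [∀ k, Module R (M k)]
  [∀ k, AddCommGroup (N k)] [∀ k, Module R (N k)]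

lemma bdry_eq_zero_iff (d : ∀ k, M k →ₗ[R] M (k - 1)) {k : ℤ} {y : M (k + 1)} :
    bdry d k y = 0 ↔ d (k + 1) y = 0 :=
  dcast_eq_zero_iff (R := R) _

lemma dcast_d_eq_bdry (d : ∀ k, M k →ₗ[R] M (k - 1)) {j k : ℤ} (h : j = k + 1)
    (h' : j - 1 = k) (y : M j) :
    dcast (R := R) h' (d j y) = bdry d k (dcast (R := R) h y) := by
  subst h; rfl

lemma IsChainMap.map_d {dM : ∀ k, M k →ₗ[R] M (k - 1)} {dN : ∀ k, N k →ₗ[R] N (k - 1)}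
    {φ : ∀ k, M k →ₗ[R] N k} (hφ : IsChainMap dM dN φ) (k : ℤ) (x : M k) :
    φ (k - 1) (dM k x) = dN k (φ k x) :=
  LinearMap.congr_fun (hφ k) x

lemma IsChainMap.map_bdry {dM : ∀ k, M k →ₗ[R] M (k - 1)}
    {dN : ∀ k, N k →ₗ[R] N (k - 1)} {φ : ∀ k, M k →ₗ[R] N k} (hφ : IsChainMap dM dN φ)
    (k : ℤ) (y : M (k + 1)) :
    φ k (bdry dM k y) = bdry dN k (φ (k + 1) y) := by
  rw [bdry, bdry, LinearMap.comp_apply, LinearMap.comp_apply, map_dcast,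
    ← LinearMap.comp_apply (φ _), hφ, LinearMap.comp_apply]

lemma homologyAt_mk_eq_zero_iff (d : ∀ k, M k →ₗ[R] M (k - 1)) {k : ℤ}
    (x : LinearMap.ker (d k)) :
    (Submodule.Quotient.mk x : homologyAt d k) = 0 ↔ ∃ y, bdry d k y = x := by
  rw [Submodule.Quotient.mk_eq_zero, Submodule.mem_comap, Submodule.coe_subtype,
    LinearMap.mem_range]

lemma IsAcyclic.exists_bdry_eq {d : ∀ k, M k →ₗ[R] M (k - 1)} (hd : IsAcyclic d) {k : ℤ}
    {x : M k} (hx : d k x = 0) : ∃ y, bdry d k y = x := by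
  have := hd k
  exact (homologyAt_mk_eq_zero_iff d ⟨x, hx⟩).mp (Subsingleton.elim _ _)

lemma IsAcyclic.exists_d_eq {d : ∀ k, M k →ₗ[R] M (k - 1)} (hd : IsAcyclic d) {k : ℤ}
    {x : M (k - 1)} (hx : d (k - 1) x = 0) : ∃ y, d k y = x := by
  obtain ⟨y, hy⟩ := hd.exists_bdry_eq hx
  refine ⟨dcast (R := R) (show k - 1 + 1 = k by ring) y, ?_⟩
  rw [d_dcast d _ (show k - 1 + 1 - 1 = k - 1 by ring)]
  exact hy

end Homology

section Square

variable {A B C D : ℤ → Type}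
  [∀ k, AddCommGroup (A k)] [∀ k, Module R (A k)]
  [∀ k, AddCommGroup (B k)] [∀ k, Module R (B k)]
  [∀ k, AddCommGroup (C k)] [∀ k, Module R (C k)]
  [∀ k, AddCommGroup (D k)] [∀ k, Module R (D k)]
  (dA : ∀ k, A k →ₗ[R] A (k - 1)) (dB : ∀ k, B k →ₗ[R] B (k - 1))
  (dC : ∀ k, C k →ₗ[R] C (k - 1)) (dD : ∀ k, D k →ₗ[R] D (k - 1))
  (f : ∀ k, A k →ₗ[R] B k) (α : ∀ k, A k →ₗ[R] C k)
  (β : ∀ k, B k →ₗ[R] D k) (g : ∀ k, C k →ₗ[R] D k)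

lemma SqD_apply (k : ℤ) (a : A k) (b : B (k + 1)) (c : C (k + 1)) (d : D (k + 2)) :
    SqD dA dB dC dD f α β g k (a, b, c, d) =
      (dA k a, dcast (R := R) (show k = k - 1 + 1 by ring) (-f k a - bdry dB k b),
        dcast (R := R) (show k = k - 1 + 1 by ring) (-α k a - bdry dC k c),
        dcast (R := R) (show k + 1 = k - 1 + 2 by ring)
          (-β (k + 1) b + g (k + 1) c +
            dcast (R := R) (show k + 2 - 1 = k + 1 by ring) (dD (k + 2) d))) := by
  simp [SqD, bdry, qA, qB, qC, qD, dcast_dcast]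

lemma bdry_SqD_fst (k : ℤ) (t : A (k + 1) × B (k + 1 + 1) × C (k + 1 + 1) × D (k + 1 + 2)) :
    (bdry (SqD dA dB dC dD f α β g) k t).1 = bdry dA k t.1 :=
  dcast_prod_fst (R := R) (N := fun k => B (k + 1) × C (k + 1) × D (k + 2)) _ _

def squareCycles (k : ℤ) : Submodule R (A k × B (k + 1) × C (k + 1)) :=
  LinearMap.ker <| ((dA k).comp (LinearMap.fst R _ _)).prod <|
    ((bdry dB k).comp ((LinearMap.fst R _ _).comp (LinearMap.snd R _ _)) +
        (f k).comp (LinearMap.fst R _ _)).prod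
      ((bdry dC k).comp ((LinearMap.snd R _ _).comp (LinearMap.snd R _ _)) +
        (α k).comp (LinearMap.fst R _ _))

variable {dA dB dC f α} in
lemma mem_squareCycles {k : ℤ} {x : A k × B (k + 1) × C (k + 1)} :
    x ∈ squareCycles dA dB dC f α k ↔
      dA k x.1 = 0 ∧ bdry dB k x.2.1 = -f k x.1 ∧ bdry dC k x.2.2 = -α k x.1 := by
  simp [squareCycles, eq_neg_iff_add_eq_zero]

def squareCycles.toHomologyA (k : ℤ) : squareCycles dA dB dC f α k →ₗ[R] homologyAt dA k :=
  (Submodule.mkQ _).comp <| LinearMap.codRestrict (LinearMap.ker (dA k))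
    ((LinearMap.fst R _ _).comp (Submodule.subtype _)) fun x => (mem_squareCycles.mp x.2).1

variable {dA dB dC dD f α β g} in
lemma squareCycles.d_eq_zero (hβ : IsChainMap dB dD β) (hg : IsChainMap dC dD g)
    (hsq : ∀ k, (β k).comp (f k) = (g k).comp (α k)) {k : ℤ}
    {x : A k × B (k + 1) × C (k + 1)} (hx : x ∈ squareCycles dA dB dC f α k) :
    dD (k + 1) (-β (k + 1) x.2.1 + g (k + 1) x.2.2) = 0 := by
  obtain ⟨-, hb, hc⟩ := mem_squareCycles.mp hx
  rw [← bdry_eq_zero_iff, map_add, map_neg, ← hβ.map_bdry, ← hg.map_bdry, hb, hc, map_neg,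
    map_neg, ← LinearMap.comp_apply (β k), hsq, LinearMap.comp_apply, neg_neg, add_neg_cancel]

def squareCycles.toHomologyD (hβ : IsChainMap dB dD β) (hg : IsChainMap dC dD g)
    (hsq : ∀ k, (β k).comp (f k) = (g k).comp (α k)) (k : ℤ) :
    squareCycles dA dB dC f α k →ₗ[R] homologyAt dD (k + 1) :=
  (Submodule.mkQ _).comp <| LinearMap.codRestrict (LinearMap.ker (dD (k + 1)))
    ((-(β (k + 1)).comp ((LinearMap.fst R _ _).comp (LinearMap.snd R _ _)) +
        (g (k + 1)).comp ((LinearMap.snd R _ _).comp (LinearMap.snd R _ _))).comp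
      (Submodule.subtype _))
    fun x => squareCycles.d_eq_zero hβ hg hsq x.2

variable {dA dB dC dD f α β g}

lemma squareCycles.toHomologyA_surjective (hf : IsChainMap dA dB f) (hα : IsChainMap dA dC α)
    (hB : IsAcyclic dB) (hC : IsAcyclic dC) (k : ℤ) :
    Function.Surjective (squareCycles.toHomologyA dA dB dC f α k) := by
  intro y
  obtain ⟨⟨a, ha⟩, rfl⟩ := Submodule.Quotient.mk_surjective _ y
  rw [LinearMap.mem_ker] at ha
  obtain ⟨b, hb⟩ := hB.exists_bdry_eq (x := f k a) (by rw [← hf.map_d, ha, map_zero])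
  obtain ⟨c, hc⟩ := hC.exists_bdry_eq (x := α k a) (by rw [← hα.map_d, ha, map_zero])
  have hx : (a, -b, -c) ∈ squareCycles dA dB dC f α k :=
    mem_squareCycles.mpr ⟨ha, by rw [map_neg, hb], by rw [map_neg, hc]⟩
  exact ⟨⟨_, hx⟩, rfl⟩

lemma squareCycles.toHomologyD_surjective (hβ : IsChainMap dB dD β) (hg : IsChainMap dC dD g)
    (hsq : ∀ k, (β k).comp (f k) = (g k).comp (α k))
    (hSq : IsAcyclic (M := fun k => A k × B (k + 1) × C (k + 1) × D (k + 2))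
      (SqD dA dB dC dD f α β g)) (k : ℤ) :
    Function.Surjective (squareCycles.toHomologyD dA dB dC dD f α β g hβ hg hsq k) := by
  intro y
  obtain ⟨⟨z, hz⟩, rfl⟩ := Submodule.Quotient.mk_surjective _ y
  have hcyc : SqD dA dB dC dD f α β g (k - 1)
      (0, 0, 0, dcast (R := R) (show k + 1 = k - 1 + 2 by ring) z) = 0 := by
    rw [SqD_apply, d_dcast dD _ (show k + 1 - 1 = k - 1 + 2 - 1 by ring),
      LinearMap.mem_ker.mp hz]
    simp
  obtain ⟨⟨a, b, c, d⟩, ht⟩ := hSq.exists_d_eq hcyc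
  rw [SqD_apply] at ht
  simp only [Prod.mk.injEq, dcast_eq_zero_iff, dcast_inj, sub_eq_zero] at ht
  obtain ⟨ha, hb, hc, hd⟩ := ht
  have hx : (a, b, c) ∈ squareCycles dA dB dC f α k :=
    mem_squareCycles.mpr ⟨ha, hb.symm, hc.symm⟩
  refine ⟨⟨_, hx⟩, ?_⟩
  change Submodule.Quotient.mk _ = Submodule.Quotient.mk _
  rw [← sub_eq_zero, ← Submodule.Quotient.mk_sub, homologyAt_mk_eq_zero_iff]
  change ∃ y, bdry dD (k + 1) y = -β (k + 1) b + g (k + 1) c - z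
  refine ⟨-dcast (R := R) (show k + 2 = k + 1 + 1 by ring) d, ?_⟩
  rw [map_neg, ← dcast_d_eq_bdry dD _ (show k + 2 - 1 = k + 1 by ring), ← hd]
  abel

lemma squareCycles.ker_toHomologyA_le (hf : IsChainMap dA dB f) (hα : IsChainMap dA dC α)
    (hβ : IsChainMap dB dD β) (hg : IsChainMap dC dD g)
    (hsq : ∀ k, (β k).comp (f k) = (g k).comp (α k)) (hB : IsAcyclic dB) (hC : IsAcyclic dC)
    (k : ℤ) :
    LinearMap.ker (squareCycles.toHomologyA dA dB dC f α k) ≤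
      LinearMap.ker (squareCycles.toHomologyD dA dB dC dD f α β g hβ hg hsq k) := by
  rintro ⟨⟨a, b, c⟩, hx⟩ hker
  obtain ⟨-, hb, hc⟩ := mem_squareCycles.mp hx
  obtain ⟨a', rfl⟩ := (homologyAt_mk_eq_zero_iff dA _).mp hker
  have hb_cycle : dB (k + 1) (b + f (k + 1) a') = 0 := by
    rw [← bdry_eq_zero_iff, map_add, hb, ← hf.map_bdry, neg_add_cancel]
  have hc_cycle : dC (k + 1) (c + α (k + 1) a') = 0 := by
    rw [← bdry_eq_zero_iff, map_add, hc, ← hα.map_bdry, neg_add_cancel]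
  obtain ⟨b', hb'⟩ := hB.exists_bdry_eq hb_cycle
  obtain ⟨c', hc'⟩ := hC.exists_bdry_eq hc_cycle
  change Submodule.Quotient.mk _ = 0
  rw [homologyAt_mk_eq_zero_iff]
  refine ⟨-β (k + 1 + 1) b' + g (k + 1 + 1) c', ?_⟩
  rw [map_add, map_neg, ← hβ.map_bdry, ← hg.map_bdry, hb', hc', map_add, map_add,
    ← LinearMap.comp_apply (β _), hsq, LinearMap.comp_apply]
  change _ = -β (k + 1) b + g (k + 1) c
  abel

lemma squareCycles.ker_toHomologyD_le (hβ : IsChainMap dB dD β) (hg : IsChainMap dC dD g)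
    (hsq : ∀ k, (β k).comp (f k) = (g k).comp (α k))
    (hSq : IsAcyclic (M := fun k => A k × B (k + 1) × C (k + 1) × D (k + 2))
      (SqD dA dB dC dD f α β g)) (k : ℤ) :
    LinearMap.ker (squareCycles.toHomologyD dA dB dC dD f α β g hβ hg hsq k) ≤
      LinearMap.ker (squareCycles.toHomologyA dA dB dC f α k) := by
  rintro ⟨⟨a, b, c⟩, hx⟩ hker
  obtain ⟨ha, hb, hc⟩ := mem_squareCycles.mp hx
  obtain ⟨e, he⟩ := (homologyAt_mk_eq_zero_iff dD _).mp hker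
  change bdry dD (k + 1) e = -β (k + 1) b + g (k + 1) c at he
  have hcyc : SqD dA dB dC dD f α β g k
      (a, b, c, -dcast (R := R) (show k + 1 + 1 = k + 2 by ring) e) = 0 := by
    rw [SqD_apply, dcast_d_eq_bdry dD (show k + 2 = k + 1 + 1 by ring), map_neg, map_neg,
      dcast_dcast, dcast_self, he, ha, hb, hc]
    simp
  obtain ⟨t, ht⟩ := hSq.exists_bdry_eq hcyc
  change Submodule.Quotient.mk _ = 0
  rw [homologyAt_mk_eq_zero_iff]
  exact ⟨t.1, by rw [← bdry_SqD_fst, ht]; rfl⟩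

end Square

theorem stmt_7_general {A B C D : ℤ → Type}
    [∀ k, AddCommGroup (A k)] [∀ k, Module R (A k)]
    [∀ k, AddCommGroup (B k)] [∀ k, Module R (B k)]
    [∀ k, AddCommGroup (C k)] [∀ k, Module R (C k)]
    [∀ k, AddCommGroup (D k)] [∀ k, Module R (D k)]
    (dA : ∀ k, A k →ₗ[R] A (k - 1)) (dB : ∀ k, B k →ₗ[R] B (k - 1))
    (dC : ∀ k, C k →ₗ[R] C (k - 1)) (dD : ∀ k, D k →ₗ[R] D (k - 1))
    (f : ∀ k, A k →ₗ[R] B k) (α : ∀ k, A k →ₗ[R] C k)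
    (β : ∀ k, B k →ₗ[R] D k) (g : ∀ k, C k →ₗ[R] D k)
    (hf : IsChainMap dA dB f) (hα : IsChainMap dA dC α)
    (hβ : IsChainMap dB dD β) (hg : IsChainMap dC dD g)
    (hsq : ∀ k, (β k).comp (f k) = (g k).comp (α k))
    (hBacyc : IsAcyclic dB) (hCacyc : IsAcyclic dC)
    (hSqacyc : IsAcyclic (M := fun k => A k × B (k + 1) × C (k + 1) × D (k + 2))
      (SqD dA dB dC dD f α β g)) :
    ∀ k : ℤ, Nonempty (homologyAt (R := R) dA k ≃ₗ[R] homologyAt (R := R) dD (k + 1)) := by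
  intro k
  exact ⟨(LinearMap.quotKerEquivOfSurjective _
      (squareCycles.toHomologyA_surjective hf hα hBacyc hCacyc k)).symm ≪≫ₗ
    Submodule.quotEquivOfEq _ _
      (le_antisymm (squareCycles.ker_toHomologyA_le hf hα hβ hg hsq hBacyc hCacyc k)
        (squareCycles.ker_toHomologyD_le hβ hg hsq hSqacyc k)) ≪≫ₗ
    LinearMap.quotKerEquivOfSurjective _
      (squareCycles.toHomologyD_surjective hβ hg hsq hSqacyc k)⟩

/-- given a commuting square `β ∘ f = g ∘ α` of chain complexes in which `B` and
`C` are acyclic and the iterated-fiber complex of the square is acyclic, there are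
isomorphisms `H_k(A) ≅ H_{k+1}(D)` for all `k`. -/
theorem stmt_7 {A B C D : ℤ → Type}
    [∀ k, AddCommGroup (A k)] [∀ k, Module R (A k)]
    [∀ k, AddCommGroup (B k)] [∀ k, Module R (B k)]
    [∀ k, AddCommGroup (C k)] [∀ k, Module R (C k)]
    [∀ k, AddCommGroup (D k)] [∀ k, Module R (D k)]
    (dA : ∀ k, A k →ₗ[R] A (k - 1)) (dB : ∀ k, B k →ₗ[R] B (k - 1))
    (dC : ∀ k, C k →ₗ[R] C (k - 1)) (dD : ∀ k, D k →ₗ[R] D (k - 1))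
    (hA : IsChainComplex dA) (hB : IsChainComplex dB)
    (hC : IsChainComplex dC) (hD : IsChainComplex dD)
    (f : ∀ k, A k →ₗ[R] B k) (α : ∀ k, A k →ₗ[R] C k)
    (β : ∀ k, B k →ₗ[R] D k) (g : ∀ k, C k →ₗ[R] D k)
    (hf : IsChainMap dA dB f) (hα : IsChainMap dA dC α)
    (hβ : IsChainMap dB dD β) (hg : IsChainMap dC dD g)
    (hsq : ∀ k, (β k).comp (f k) = (g k).comp (α k))
    (hBacyc : IsAcyclic dB) (hCacyc : IsAcyclic dC)
    (hSqacyc : IsAcyclic (M := fun k => A k × B (k + 1) × C (k + 1) × D (k + 2))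
      (SqD dA dB dC dD f α β g)) :
    ∀ k : ℤ, Nonempty (homologyAt (R := R) dA k ≃ₗ[R] homologyAt (R := R) dD (k + 1)) :=
  stmt_7_general dA dB dC dD f α β g hf hα hβ hg hsq hBacyc hCacyc hSqacyc
end

section
/- For any n-cube X of ℤ-indexed chain complexes of R-modules, the map ξ : tX → t²X which sends an element x of the summand of tX indexed by T ⊆ {1,…,n} to the sum, over all ordered pairs (V₁, V₂) of disjoint subsets of {1,…,n} with V₁ ∪ V₂ = T, of (−1)^{sgn(V₁,V₂)} x placed in the summand of t²X indexed by (V₁, V₂), is a chain map. -/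
open scoped Classical

variable {R : Type} [CommRing R]

/-- An `ι`-indexed cube of chain complexes of `R`-modules: the data of a chain complex
`ob S` for every `S ⊆ ι` and a degreewise map `ob S → ob T` for every inclusion `S ⊆ T`.
(The conditions that each `ob S` is a complex, each `map` is a chain map, and the
assignment is functorial are stated separately below.) -/
structure Cube (R : Type) [CommRing R] (ι : Type) [DecidableEq ι] where
  ob : Finset ι → ℤ → Type
  [acg : ∀ S k, AddCommGroup (ob S k)]
  [mod : ∀ S k, Module R (ob S k)]
  d : ∀ S k, ob S k →ₗ[R] ob S (k - 1)
  map : ∀ S T, S ⊆ T → ∀ k, ob S k →ₗ[R] ob T k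

attribute [instance] Cube.acg Cube.mod

namespace Cube

variable {ι : Type} [DecidableEq ι]

/-- Transport along equalities of the indexing subset and of the degree. -/
def cast (X : Cube R ι) {S T : Finset ι} {a b : ℤ} (h1 : S = T) (h2 : a = b) :
    X.ob S a →ₗ[R] X.ob T b where
  toFun x := h1 ▸ h2 ▸ x
  map_add' := by subst h1; subst h2; intros; rfl
  map_smul' := by subst h1; subst h2; intros; rfl

/-- Each `ob S` is a chain complex. -/
def IsComplex (X : Cube R ι) : Prop := ∀ S, IsChainComplex (R := R) (X.d S)

/-- Each structure map is a chain map. -/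
def MapsAreChain (X : Cube R ι) : Prop :=
  ∀ S T (h : S ⊆ T), IsChainMap (R := R) (X.d S) (X.d T) (fun k => X.map S T h k)

/-- The structure maps are functorial, i.e. `X` is a functor on the poset of subsets. -/
def IsFunctorial (X : Cube R ι) : Prop :=
  (∀ S k, X.map S S (subset_refl S) k = LinearMap.id) ∧
  (∀ S T U (hST : S ⊆ T) (hTU : T ⊆ U) k,
    (X.map T U hTU k).comp (X.map S T hST k) = X.map S U (hST.trans hTU) k)

end Cube

section T

variable {ι : Type} [DecidableEq ι] [LinearOrder ι]

/-- `sgn(σᵢ^S) = |{s ∈ S : s > i}|`. -/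
def sgnIns (i : ι) (S : Finset ι) : ℕ := (S.filter fun s => i < s).card

/-- The degree-`k` part of the explicit iterated-fiber complex `tX`:
the direct sum over `T ⊆ ι` of `X(T)_{k + |T|}`. -/
abbrev tOb (X : Cube R ι) (k : ℤ) : Type := ∀ T : Finset ι, X.ob T (k + T.card)

/-- The differential of `tX`: it sends an element `x` of the summand indexed by `T` to
`(-1)^{|T|} d(x)` plus the sum over `i ∉ T` of `(-1)^{sgn(σᵢ^T) + 1} X(T ⊆ T ∪ {i})(x)`
placed in the summand indexed by `T ∪ {i}`. -/
noncomputable def tD (X : Cube R ι) (k : ℤ) : tOb X k →ₗ[R] tOb X (k - 1) :=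
  LinearMap.pi fun T =>
    (((-1 : R) ^ T.card) •
      ((X.cast rfl (show k + (T.card : ℤ) - 1 = k - 1 + T.card by ring)).comp
        ((X.d T (k + T.card)).comp (LinearMap.proj T))))
    + ∑ i ∈ T.attach,
      (((-1 : R) ^ (sgnIns i.1 (T.erase i.1) + 1)) •
        ((X.cast rfl (show k + ((T.erase i.1).card : ℤ) = k - 1 + T.card by
            have h1 := Finset.card_erase_of_mem i.2
            have h2 : 0 < T.card := Finset.card_pos.mpr ⟨i.1, i.2⟩
            omega)).comp
          ((X.map (T.erase i.1) T (Finset.erase_subset _ _) (k + (T.erase i.1).card)).comp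
            (LinearMap.proj (T.erase i.1)))))


section Double

/-- The linear order on a disjoint union `α ⊕ β` in which everything in `α` precedes
everything in `β` (corresponding to the identification of `{1, …, 2n}` with two copies of
`{1, …, n}`). -/
instance sumLinearOrder {α β : Type} [LinearOrder α] [LinearOrder β] : LinearOrder (α ⊕ β) :=
  inferInstanceAs (LinearOrder (α ⊕ₗ β))

variable {ι : Type} [DecidableEq ι]

/-- The `2n`-cube `C` associated to an `n`-cube `X`: identifying a subset `W ⊆ {1, …, 2n}`
with the pair `(W₁, W₂)` of subsets of `{1, …, n}`, it is given by `C(W) = X(W₁ ∪ W₂)`. -/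
def Cube.dbl (X : Cube R ι) : Cube R (ι ⊕ ι) where
  ob W k := X.ob (W.toLeft ∪ W.toRight) k
  d W k := X.d _ k
  map W W' h k := X.map _ _
    (Finset.union_subset_union (Finset.toLeft_subset_toLeft h)
      (Finset.toRight_subset_toRight h)) k

variable [LinearOrder ι]

/-- `sgn(S, T) = |{(i, j) : i < j, i ∈ T, j ∈ S}|`, the sign statistic associated to the
`2 × n` 0–1 matrix whose first row is the indicator of `S` and second row the indicator
of `T`. -/
def sgn2 (S T : Finset ι) : ℕ := ((T ×ˢ S).filter fun p => p.1 < p.2).card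

/-- The map `ξ : tX → t²X`: it sends an element `x` of the summand indexed by `T` to the
sum, over all ordered pairs `(V₁, V₂)` of disjoint subsets with `V₁ ∪ V₂ = T`, of
`(-1)^{sgn(V₁, V₂)} x` placed in the summand of `t²X` indexed by `(V₁, V₂)`. -/
noncomputable def xiMap (X : Cube R ι) (k : ℤ) : tOb X k →ₗ[R] tOb X.dbl k :=
  LinearMap.pi fun W =>
    if h : Disjoint W.toLeft W.toRight then
      ((-1 : R) ^ sgn2 W.toLeft W.toRight) •
        ((X.cast rfl (show k + (((W.toLeft ∪ W.toRight) : Finset ι).card : ℤ) = k + W.card by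
            rw [Finset.card_union_of_disjoint h,
              ← Finset.card_toLeft_add_card_toRight (u := W)])).comp
          (LinearMap.proj (W.toLeft ∪ W.toRight)))
    else 0

end Double

/-!
Work componentwise at `W = (P, Q)`. If `P` and `Q` are disjoint, the `d`-terms of both sides
agree, and the face of `t²X` removing `a` from `P` (resp. `Q`) carries the same structure
map `X(P ∪ Q ∖ a) → X(P ∪ Q)` as the face of `tX` at `P ∪ Q` removing `a`; the signs agree
modulo 2 because removing `a` from `P` (resp. `Q`) lowers `sgn(P, Q)` by the number of elements
of `Q` below `a` (resp. of `P` above `a`). If `P` and `Q` meet, `ξ` vanishes at `(P, Q)`, and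
so does every face of `t²X` at `(P, Q)` except possibly the two removing a common element `c`
from `P` or from `Q`; these carry the same map `X(P ∪ Q ∖ c) → X(P ∪ Q)` with opposite signs.
-/

open Finset

section SignCounts

variable {ι : Type} [LinearOrder ι]

lemma sgn2_eq_sum_left (S T : Finset ι) : sgn2 S T = ∑ s ∈ S, #(T.filter (· < s)) := by
  simp only [sgn2, card_filter, sum_product_right]

lemma sgn2_eq_sum_right (S T : Finset ι) : sgn2 S T = ∑ t ∈ T, #(S.filter (t < ·)) := by
  simp only [sgn2, card_filter, sum_product]

lemma sgn2_of_mem_left [DecidableEq ι] {S : Finset ι} (T : Finset ι) {a : ι} (ha : a ∈ S) :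
    sgn2 S T = sgn2 (S.erase a) T + #(T.filter (· < a)) := by
  rw [sgn2_eq_sum_left, sgn2_eq_sum_left, sum_erase_add _ _ ha]

lemma sgn2_of_mem_right [DecidableEq ι] (S : Finset ι) {T : Finset ι} {a : ι} (ha : a ∈ T) :
    sgn2 S T = sgn2 S (T.erase a) + #(S.filter (a < ·)) := by
  rw [sgn2_eq_sum_right, sgn2_eq_sum_right, sum_erase_add _ _ ha]

lemma sgnIns_erase_self [DecidableEq ι] (a : ι) (S : Finset ι) :
    sgnIns a (S.erase a) = #(S.filter (a < ·)) := by
  rw [sgnIns, filter_erase, erase_eq_of_notMem (by simp)]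

lemma sgnIns_erase_union [DecidableEq ι] {L Q : Finset ι} (hd : Disjoint L Q) (a : ι) :
    sgnIns a ((L ∪ Q).erase a) = sgnIns a (L.erase a) + sgnIns a (Q.erase a) := by
  simp only [sgnIns_erase_self, filter_union, card_union_of_disjoint (disjoint_filter_filter hd)]

lemma card_filter_lt_add_card_filter_gt {a : ι} {S : Finset ι} (ha : a ∉ S) :
    #(S.filter (· < a)) + #(S.filter (a < ·)) = #S := by
  conv_rhs => rw [← card_filter_add_card_filter_not (p := (· < a))]
  congr 2
  exact filter_congr fun s hs => by
    simp only [not_lt]; exact ⟨le_of_lt, fun h => h.lt_of_ne' (ne_of_mem_of_not_mem hs ha)⟩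

lemma card_filter_lt_add_card_filter_gt_of_mem [DecidableEq ι] {a : ι} {S : Finset ι}
    (ha : a ∈ S) :
    #(S.filter (· < a)) + #(S.filter (a < ·)) + 1 = #S := by
  rw [← card_erase_add_one ha, ← card_filter_lt_add_card_filter_gt (notMem_erase a S),
    filter_erase, filter_erase, erase_eq_of_notMem (by simp), erase_eq_of_notMem (by simp)]

end SignCounts

section SumOrder

variable {ι : Type} [DecidableEq ι]

@[simp] lemma toLeft_erase_inl (W : Finset (ι ⊕ ι)) (a : ι) :
    (W.erase (.inl a)).toLeft = W.toLeft.erase a := by ext; simp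
@[simp] lemma toRight_erase_inl (W : Finset (ι ⊕ ι)) (a : ι) :
    (W.erase (.inl a)).toRight = W.toRight := by ext; simp
@[simp] lemma toLeft_erase_inr (W : Finset (ι ⊕ ι)) (a : ι) :
    (W.erase (.inr a)).toLeft = W.toLeft := by ext; simp
@[simp] lemma toRight_erase_inr (W : Finset (ι ⊕ ι)) (a : ι) :
    (W.erase (.inr a)).toRight = W.toRight.erase a := by ext; simp

lemma sgnIns_inl_erase [LinearOrder ι] (W : Finset (ι ⊕ ι)) (a : ι) :
    sgnIns (.inl a) (W.erase (.inl a)) = sgnIns a (W.toLeft.erase a) + #W.toRight := by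
  simp only [sgnIns_erase_self, card_filter, sum_sum_eq_sum_toLeft_add_sum_toRight]
  congr 1
  · exact sum_congr rfl fun b _ => if_congr Sum.Lex.inl_lt_inl_iff rfl rfl
  · simp only [card_eq_sum_ones]
    exact sum_congr rfl fun b _ => if_pos (Sum.Lex.inl_lt_inr a b)

lemma sgnIns_inr_erase [LinearOrder ι] (W : Finset (ι ⊕ ι)) (a : ι) :
    sgnIns (.inr a) (W.erase (.inr a)) = sgnIns a (W.toRight.erase a) := by
  simp only [sgnIns_erase_self, card_filter, sum_sum_eq_sum_toLeft_add_sum_toRight]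
  refine (congrArg₂ (· + · : ℕ → ℕ → ℕ)
    (sum_eq_zero fun b _ => if_neg (Sum.Lex.not_inr_lt_inl (α := ι) (β := ι)))
    (sum_congr rfl fun b _ => if_congr (Sum.Lex.inr_lt_inr_iff (α := ι) (β := ι)) rfl rfl)
    ).trans (zero_add _)

end SumOrder

namespace Cube

variable {ι : Type} [DecidableEq ι] (X : Cube R ι)

lemma cast_cast {S S' S'' : Finset ι} {a b c : ℤ} (h₁ : S = S') (h₁' : S' = S'')
    (h₂ : a = b) (h₂' : b = c) (v : X.ob S a) :
    X.cast h₁' h₂' (X.cast h₁ h₂ v) = X.cast (h₁.trans h₁') (h₂.trans h₂') v := by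
  subst h₁ h₁' h₂ h₂'; rfl

lemma d_cast {S S' : Finset ι} {a b : ℤ} (h₁ : S = S') (h₂ : a = b) (v : X.ob S a) :
    X.d S' b (X.cast h₁ h₂ v) = X.cast h₁ (by rw [h₂]) (X.d S a v) := by
  subst h₁ h₂; rfl

lemma map_cast {S₀ S T : Finset ι} {a b : ℤ} (h₁ : S₀ = S) (h₂ : a = b) (hST : S ⊆ T)
    (v : X.ob S₀ a) :
    X.map S T hST b (X.cast h₁ h₂ v) = X.cast rfl h₂ (X.map S₀ T (h₁ ▸ hST) a v) := by
  subst h₁ h₂; rfl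

lemma cast_map_congr {k m : ℤ} (x : ∀ S : Finset ι, X.ob S (k + #S)) {S S' T : Finset ι}
    (hS : S = S') (hST : S ⊆ T) (hST' : S' ⊆ T) (p : k + #S = m) (p' : k + #S' = m) :
    X.cast rfl p (X.map S T hST _ (x S)) = X.cast rfl p' (X.map S' T hST' _ (x S')) := by
  subst hS; rfl

lemma dbl_cast {W : Finset (ι ⊕ ι)} {a b : ℤ} (h : a = b) (v : X.dbl.ob W a) :
    X.dbl.cast rfl h v = X.cast (S := W.toLeft ∪ W.toRight) rfl h v := by
  subst h; rfl

lemma dbl_d (W : Finset (ι ⊕ ι)) (m : ℤ) (v : X.dbl.ob W m) :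
    X.dbl.d W m v = X.d (W.toLeft ∪ W.toRight) m v :=
  rfl

lemma dbl_map {W W' : Finset (ι ⊕ ι)} (h : W ⊆ W') (m : ℤ) (v : X.dbl.ob W m) :
    X.dbl.map W W' h m v = X.map (W.toLeft ∪ W.toRight) (W'.toLeft ∪ W'.toRight)
      (union_subset_union (toLeft_subset_toLeft h) (toRight_subset_toRight h)) m v :=
  rfl

end Cube

section Differential

variable {ι : Type} [DecidableEq ι] [LinearOrder ι]

/-- The summand of `tD X k x` at `S` coming from the face `S.erase i ⊆ S`, as a total
function of `i` (zero for `i ∉ S`). -/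
noncomputable def tDTerm (X : Cube R ι) (k : ℤ) (x : tOb X k) (S : Finset ι) (i : ι) :
    X.ob S (k - 1 + #S) :=
  if hi : i ∈ S then
    (-1 : R) ^ (sgnIns i (S.erase i) + 1) •
      X.cast rfl (by have := card_erase_add_one hi; omega)
        (X.map (S.erase i) S (erase_subset _ _) _ (x (S.erase i)))
  else 0

lemma tD_apply (X : Cube R ι) (k : ℤ) (x : tOb X k) (S : Finset ι) :
    tD X k x S = (-1 : R) ^ #S • X.cast rfl (by ring) (X.d S (k + #S) (x S))
      + ∑ i ∈ S, tDTerm X k x S i := by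
  simp only [tD, LinearMap.pi_apply, LinearMap.add_apply, LinearMap.smul_apply,
    LinearMap.coe_comp, Function.comp_apply, LinearMap.proj_apply, LinearMap.coe_sum,
    Finset.sum_apply]
  rw [← sum_attach S]
  exact congrArg _ (sum_congr rfl fun i _ => by rw [tDTerm, dif_pos i.2])

/-- The halves of `W` are taken up to propositional equality so that this applies at
`W.erase j`. -/
lemma xiMap_apply (X : Cube R ι) (k : ℤ) (x : tOb X k) (W : Finset (ι ⊕ ι)) {A B : Finset ι}
    (hA : W.toLeft = A) (hB : W.toRight = B) :
    xiMap X k x W = if h : Disjoint A B then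
      (-1 : R) ^ sgn2 A B • X.cast (by rw [hA, hB])
        (by rw [card_union_of_disjoint h, ← hA, ← hB, ← card_toLeft_add_card_toRight])
        (x (A ∪ B))
    else 0 := by
  subst hA hB
  simp only [xiMap, LinearMap.pi_apply]
  split_ifs <;> rfl

variable (X : Cube R ι) (k : ℤ) (x : tOb X k)

lemma tDTerm_dbl_xiMap_eq_zero {W : Finset (ι ⊕ ι)} {j : ι ⊕ ι}
    (hj : ¬Disjoint (W.erase j).toLeft (W.erase j).toRight) :
    tDTerm X.dbl k (xiMap X k x) W j = 0 := by
  unfold tDTerm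
  split_ifs
  · rw [xiMap_apply X k x _ rfl rfl, dif_neg hj]
    erw [map_zero, map_zero, smul_zero]
  · rfl

lemma tDTerm_dbl_xiMap_inl {W : Finset (ι ⊕ ι)} {a : ι} (ha : .inl a ∈ W)
    (hd : Disjoint (W.toLeft.erase a) W.toRight)
    (hdeg : k + (#(W.toLeft.erase a ∪ W.toRight) : ℤ) = k - 1 + #W) :
    tDTerm X.dbl k (xiMap X k x) W (.inl a) =
      (-1 : R) ^ (sgnIns a (W.toLeft.erase a) + #W.toRight + 1 + sgn2 (W.toLeft.erase a) W.toRight)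
        • X.cast rfl hdeg (X.map _ (W.toLeft ∪ W.toRight)
          (union_subset_union (erase_subset _ _) subset_rfl) _
          (x (W.toLeft.erase a ∪ W.toRight))) := by
  rw [tDTerm, dif_pos ha, xiMap_apply X k x _ (toLeft_erase_inl W a) (toRight_erase_inl W a),
    dif_pos hd]
  erw [map_smul, map_smul, X.dbl_cast, X.dbl_map, X.map_cast, X.cast_cast, smul_smul]
  rw [← pow_add, sgnIns_inl_erase]
  rfl

lemma tDTerm_dbl_xiMap_inr {W : Finset (ι ⊕ ι)} {a : ι} (ha : .inr a ∈ W)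
    (hd : Disjoint W.toLeft (W.toRight.erase a))
    (hdeg : k + (#(W.toLeft ∪ W.toRight.erase a) : ℤ) = k - 1 + #W) :
    tDTerm X.dbl k (xiMap X k x) W (.inr a) =
      (-1 : R) ^ (sgnIns a (W.toRight.erase a) + 1 + sgn2 W.toLeft (W.toRight.erase a))
        • X.cast rfl hdeg (X.map _ (W.toLeft ∪ W.toRight)
          (union_subset_union subset_rfl (erase_subset _ _)) _
          (x (W.toLeft ∪ W.toRight.erase a))) := by
  rw [tDTerm, dif_pos ha, xiMap_apply X k x _ (toLeft_erase_inr W a) (toRight_erase_inr W a),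
    dif_pos hd]
  erw [map_smul, map_smul, X.dbl_cast, X.dbl_map, X.map_cast, X.cast_cast, smul_smul]
  rw [← pow_add, sgnIns_inr_erase]
  rfl

end Differential

lemma neg_one_pow_smul_add_neg_one_pow_smul_eq_zero {M : Type*} [AddCommGroup M] [Module R M]
    {v w : M} (hvw : v = w) {m n : ℕ} (hmn : Even m ↔ ¬Even n) :
    (-1 : R) ^ m • v + (-1 : R) ^ n • w = 0 := by
  rw [hvw, ← add_smul, neg_one_pow_congr (n := n + 1) (by simp [Nat.even_add_one, hmn]),
    pow_succ, mul_neg_one, neg_add_cancel, zero_smul]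

lemma disjoint_erase_left_iff_disjoint_erase_right {ι : Type*} [DecidableEq ι]
    {P Q : Finset ι} {c : ι} :
    Disjoint (P.erase c) Q ↔ Disjoint P (Q.erase c) := by
  simp only [disjoint_left, mem_erase]
  grind

section ChainMap

variable {ι : Type} [DecidableEq ι] [LinearOrder ι] (X : Cube R ι) (k : ℤ) (x : tOb X k)

lemma xiMap_tDTerm_inl {W : Finset (ι ⊕ ι)} (hd : Disjoint W.toLeft W.toRight) {a : ι}
    (ha : a ∈ W.toLeft) (hdeg : k - 1 + (#(W.toLeft ∪ W.toRight) : ℤ) = k - 1 + #W) :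
    (-1 : R) ^ sgn2 W.toLeft W.toRight • X.cast rfl hdeg (tDTerm X k x (W.toLeft ∪ W.toRight) a)
      = tDTerm X.dbl k (xiMap X k x) W (.inl a) := by
  have haQ : a ∉ W.toRight := disjoint_left.1 hd ha
  have hd' : Disjoint (W.toLeft.erase a) W.toRight := hd.mono_left (erase_subset _ _)
  rw [tDTerm_dbl_xiMap_inl X k x (mem_toLeft.1 ha) hd' (by
      have := card_erase_add_one ha
      have := card_toLeft_add_card_toRight (u := W)
      rw [card_union_of_disjoint hd']; omega),
    tDTerm, dif_pos (mem_union_left _ ha), map_smul, smul_smul, X.cast_cast, ← pow_add]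
  congr 1
  · refine neg_one_pow_congr ?_
    have := sgnIns_erase_union hd a
    have := sgnIns_erase_self a W.toRight
    have := sgn2_of_mem_left W.toRight ha
    have := card_filter_lt_add_card_filter_gt haQ
    simp only [Nat.even_iff]; omega
  · exact X.cast_map_congr x (by rw [erase_union_distrib, erase_eq_of_notMem haQ]) _ _ _ _

lemma xiMap_tDTerm_inr {W : Finset (ι ⊕ ι)} (hd : Disjoint W.toLeft W.toRight) {a : ι}
    (ha : a ∈ W.toRight) (hdeg : k - 1 + (#(W.toLeft ∪ W.toRight) : ℤ) = k - 1 + #W) :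
    (-1 : R) ^ sgn2 W.toLeft W.toRight • X.cast rfl hdeg (tDTerm X k x (W.toLeft ∪ W.toRight) a)
      = tDTerm X.dbl k (xiMap X k x) W (.inr a) := by
  have haP : a ∉ W.toLeft := disjoint_right.1 hd ha
  have hd' : Disjoint W.toLeft (W.toRight.erase a) := hd.mono_right (erase_subset _ _)
  rw [tDTerm_dbl_xiMap_inr X k x (mem_toRight.1 ha) hd' (by
      have := card_erase_add_one ha
      have := card_toLeft_add_card_toRight (u := W)
      rw [card_union_of_disjoint hd']; omega),
    tDTerm, dif_pos (mem_union_right _ ha), map_smul, smul_smul, X.cast_cast, ← pow_add]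
  congr 1
  · refine neg_one_pow_congr ?_
    have := sgnIns_erase_union hd a
    have := sgnIns_erase_self a W.toLeft
    have := sgn2_of_mem_right W.toLeft ha
    simp only [Nat.even_iff]; omega
  · exact X.cast_map_congr x (by rw [erase_union_distrib, erase_eq_of_notMem haP]) _ _ _ _

lemma xiMap_tD_apply_of_disjoint {W : Finset (ι ⊕ ι)} (hd : Disjoint W.toLeft W.toRight) :
    xiMap X (k - 1) (tD X k x) W = tD X.dbl k (xiMap X k x) W := by
  have hcard : #(W.toLeft ∪ W.toRight) = #W := by
    rw [card_union_of_disjoint hd, card_toLeft_add_card_toRight]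
  rw [xiMap_apply X _ _ W rfl rfl, dif_pos hd, tD_apply X k x, tD_apply X.dbl k,
    sum_sum_eq_sum_toLeft_add_sum_toRight, xiMap_apply X k x W rfl rfl, dif_pos hd, map_add,
    smul_add, map_sum, smul_sum, sum_union hd]
  congr 1
  · erw [map_smul (X.dbl.d W _)]
    simp only [map_smul, smul_smul]
    erw [X.dbl_d, X.d_cast, X.cast_cast]
    congr 1
    · rw [hcard, mul_comm]
    · exact ((X.dbl_cast _ _).trans (X.cast_cast _ _ _ _ _)).symm
  · exact congrArg₂ (· + ·) (sum_congr rfl fun a ha => xiMap_tDTerm_inl X k x hd ha _)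
      (sum_congr rfl fun a ha => xiMap_tDTerm_inr X k x hd ha _)

lemma tDTerm_dbl_xiMap_inl_add_inr {W : Finset (ι ⊕ ι)} {c : ι} (hP : c ∈ W.toLeft)
    (hQ : c ∈ W.toRight) :
    tDTerm X.dbl k (xiMap X k x) W (.inl c) + tDTerm X.dbl k (xiMap X k x) W (.inr c) = 0 := by
  by_cases hd : Disjoint (W.toLeft.erase c) W.toRight
  · have hd' := disjoint_erase_left_iff_disjoint_erase_right.1 hd
    have hcard := card_toLeft_add_card_toRight (u := W)
    rw [tDTerm_dbl_xiMap_inl X k x (mem_toLeft.1 hP) hd (by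
        have := card_erase_add_one hP
        rw [card_union_of_disjoint hd]; omega),
      tDTerm_dbl_xiMap_inr X k x (mem_toRight.1 hQ) hd' (by
        have := card_erase_add_one hQ
        rw [card_union_of_disjoint hd']; omega)]
    refine neg_one_pow_smul_add_neg_one_pow_smul_eq_zero
      (X.cast_map_congr x (by ext b; by_cases b = c <;> simp_all) _ _ _ _) ?_
    have := sgn2_of_mem_left W.toRight hP
    have := sgn2_of_mem_right W.toLeft hQ
    have := card_filter_lt_add_card_filter_gt_of_mem hQ
    have := sgnIns_erase_self c W.toLeft
    have := sgnIns_erase_self c W.toRight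
    simp only [Nat.even_iff]; omega
  · have hd' := mt disjoint_erase_left_iff_disjoint_erase_right.2 hd
    rw [tDTerm_dbl_xiMap_eq_zero X k x (by simpa using hd),
      tDTerm_dbl_xiMap_eq_zero X k x (by simpa using hd'), add_zero]

lemma xiMap_tD_apply_of_not_disjoint {W : Finset (ι ⊕ ι)} (hd : ¬Disjoint W.toLeft W.toRight) :
    xiMap X (k - 1) (tD X k x) W = tD X.dbl k (xiMap X k x) W := by
  obtain ⟨c, hP, hQ⟩ := not_disjoint_iff.1 hd
  rw [xiMap_apply X _ _ W rfl rfl, dif_neg hd, tD_apply, xiMap_apply X k x W rfl rfl, dif_neg hd]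
  erw [map_zero, map_zero, smul_zero, zero_add]
  refine Eq.symm ((sum_eq_add (.inl c) (.inr c) Sum.inl_ne_inr (fun j hj hjc => ?_)
    (absurd (mem_toLeft.1 hP)) (absurd (mem_toRight.1 hQ))).trans
    (tDTerm_dbl_xiMap_inl_add_inr X k x hP hQ))
  exact tDTerm_dbl_xiMap_eq_zero X k x
    (not_disjoint_iff.2
      ⟨c, by simpa [Ne.symm hjc.1] using hP, by simpa [Ne.symm hjc.2] using hQ⟩)

theorem xiMap_isChainMap (X : Cube R ι) :
    IsChainMap (M := fun k => tOb X k) (N := fun k => tOb X.dbl k)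
      (tD X) (tD X.dbl) (xiMap X) := by
  intro k
  ext x W
  by_cases hd : Disjoint W.toLeft W.toRight
  · exact xiMap_tD_apply_of_disjoint X k x hd
  · exact xiMap_tD_apply_of_not_disjoint X k x hd

end ChainMap

theorem stmt_9_general (n : ℕ) (X : Cube R (Fin n)) :
    IsChainMap (M := fun k => tOb X k) (N := fun k => tOb X.dbl k)
      (tD X) (tD X.dbl) (xiMap X) :=
  xiMap_isChainMap X

/-- for any `n`-cube `X` of chain complexes of `R`-modules, the map
`ξ : tX → t²X` is a chain map. -/
theorem stmt_9 (n : ℕ) (X : Cube R (Fin n)) (h1 : X.IsComplex) (h2 : X.MapsAreChain)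
    (h3 : X.IsFunctorial) :
    IsChainMap (M := fun k => tOb X k) (N := fun k => tOb X.dbl k)
      (tD X) (tD X.dbl) (xiMap X) :=
  stmt_9_general n X
end T
end

section
/- For any n-cube X of ℤ-indexed chain complexes of R-modules, the two composites tξ ∘ ξ and ξ_t ∘ ξ from tX to t³X are equal. Explicitly, both send an element x of the summand of tX indexed by T ⊆ {1,…,n} to the sum over all ordered triples (S₁, S₂, S₃) of pairwise disjoint subsets of {1,…,n} with S₁ ∪ S₂ ∪ S₃ = T of (−1)^{sgn(S₁,S₂) + sgn(S₁∪S₂, S₃)} x = (−1)^{sgn(S₂,S₃) + sgn(S₁, S₂∪S₃)} x placed in the summand indexed by (S₁, S₂, S₃). -/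
open scoped Classical

variable {R : Type} [CommRing R]

section T

variable {ι : Type} [DecidableEq ι] [LinearOrder ι]

section Pair

variable {ι : Type} [DecidableEq ι]

/-- The subset of `{1, …, 2n}` corresponding to a pair of subsets of `{1, …, n}` under the
identification of `{1, …, 2n}` with two copies of `{1, …, n}`. -/
def pairFS (U V : Finset ι) : Finset (ι ⊕ ι) :=
  U.map Function.Embedding.inl ∪ V.map Function.Embedding.inr

theorem pairFS_toLeft (U V : Finset ι) : (pairFS U V).toLeft = U := by
  ext x
  simp [pairFS, Finset.mem_toLeft]

theorem pairFS_toRight (U V : Finset ι) : (pairFS U V).toRight = V := by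
  ext x
  simp [pairFS, Finset.mem_toRight]

theorem pairFS_card (U V : Finset ι) : (pairFS U V).card = U.card + V.card := by
  rw [pairFS, Finset.card_union_of_disjoint, Finset.card_map, Finset.card_map]
  simp [Finset.disjoint_left]

variable [LinearOrder ι]

/-- The projection `γ_t : t²X → tX` onto the summands indexed by pairs of the form
`(T, ∅)`, identified with the corresponding summands of `tX`. -/
noncomputable def gammaT (X : Cube R ι) (k : ℤ) : tOb X.dbl k →ₗ[R] tOb X k :=
  LinearMap.pi fun T =>
    (X.cast (show (pairFS T ∅).toLeft ∪ (pairFS T ∅).toRight = T by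
        rw [pairFS_toLeft, pairFS_toRight, Finset.union_empty])
      (show k + ((pairFS T (∅ : Finset ι)).card : ℤ) = k + T.card by
        rw [pairFS_card]; simp)).comp
      (LinearMap.proj (pairFS T ∅))

/-- The projection `tγ : t²X → tX` onto the summands indexed by pairs of the form
`(∅, T)`, identified with the corresponding summands of `tX`. -/
noncomputable def tGamma (X : Cube R ι) (k : ℤ) : tOb X.dbl k →ₗ[R] tOb X k :=
  LinearMap.pi fun T =>
    (X.cast (show (pairFS ∅ T).toLeft ∪ (pairFS ∅ T).toRight = T by
        rw [pairFS_toLeft, pairFS_toRight, Finset.empty_union])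
      (show k + ((pairFS (∅ : Finset ι) T).card : ℤ) = k + T.card by
        rw [pairFS_card]; simp)).comp
      (LinearMap.proj (pairFS ∅ T))

end Pair

section Triple

variable {ι : Type} [DecidableEq ι]

/-- The `3n`-cube `C′` associated to an `n`-cube `X`: identifying a subset `V` of
`{1, …, 3n}` with the triple `(V₁, V₂, V₃)` of subsets of `{1, …, n}`, it is given by
`C′(V) = X(V₁ ∪ V₂ ∪ V₃)`. -/
def Cube.trpl (X : Cube R ι) : Cube R (ι ⊕ (ι ⊕ ι)) where
  ob V k := X.ob (V.toLeft ∪ V.toRight.toLeft ∪ V.toRight.toRight) k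
  d V k := X.d _ k
  map V V' h k := X.map _ _
    (Finset.union_subset_union
      (Finset.union_subset_union (Finset.toLeft_subset_toLeft h)
        (Finset.toLeft_subset_toLeft (Finset.toRight_subset_toRight h)))
      (Finset.toRight_subset_toRight (Finset.toRight_subset_toRight h))) k

variable [LinearOrder ι]

/-- `tξ : t²X → t³X` sends an element `x` of the summand indexed by `(U, T)` to
`Σ_{(V₁, V₂) disjoint, V₁ ∪ V₂ = T} (-1)^{sgn(V₁, V₂)} x` placed in the summands
indexed by `(U, V₁, V₂)`. -/
noncomputable def tXi (X : Cube R ι) (k : ℤ) : tOb X.dbl k →ₗ[R] tOb X.trpl k :=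
  LinearMap.pi fun V =>
    if h : Disjoint V.toRight.toLeft V.toRight.toRight then
      ((-1 : R) ^ sgn2 V.toRight.toLeft V.toRight.toRight) •
        ((X.cast
          (show (pairFS V.toLeft (V.toRight.toLeft ∪ V.toRight.toRight)).toLeft ∪
              (pairFS V.toLeft (V.toRight.toLeft ∪ V.toRight.toRight)).toRight =
              V.toLeft ∪ V.toRight.toLeft ∪ V.toRight.toRight by
            rw [pairFS_toLeft, pairFS_toRight, Finset.union_assoc])
          (show k + ((pairFS V.toLeft (V.toRight.toLeft ∪ V.toRight.toRight)).card : ℤ) =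
              k + V.card by
            rw [pairFS_card, Finset.card_union_of_disjoint h,
              ← Finset.card_toLeft_add_card_toRight (u := V),
              ← Finset.card_toLeft_add_card_toRight (u := V.toRight)])).comp
          (LinearMap.proj (pairFS V.toLeft (V.toRight.toLeft ∪ V.toRight.toRight))))
    else 0

/-- `ξ_t : t²X → t³X` sends an element `x` of the summand indexed by `(U, T)` to
`Σ_{(U₁, U₂) disjoint, U₁ ∪ U₂ = U} (-1)^{sgn(U₁, U₂)} x` placed in the summands
indexed by `(U₁, U₂, T)`. -/
noncomputable def xiT (X : Cube R ι) (k : ℤ) : tOb X.dbl k →ₗ[R] tOb X.trpl k :=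
  LinearMap.pi fun V =>
    if h : Disjoint V.toLeft V.toRight.toLeft then
      ((-1 : R) ^ sgn2 V.toLeft V.toRight.toLeft) •
        ((X.cast
          (show (pairFS (V.toLeft ∪ V.toRight.toLeft) V.toRight.toRight).toLeft ∪
              (pairFS (V.toLeft ∪ V.toRight.toLeft) V.toRight.toRight).toRight =
              V.toLeft ∪ V.toRight.toLeft ∪ V.toRight.toRight by
            rw [pairFS_toLeft, pairFS_toRight])
          (show k + ((pairFS (V.toLeft ∪ V.toRight.toLeft) V.toRight.toRight).card : ℤ) =
              k + V.card by
            rw [pairFS_card, Finset.card_union_of_disjoint h,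
              ← Finset.card_toLeft_add_card_toRight (u := V),
              ← Finset.card_toLeft_add_card_toRight (u := V.toRight)]
            push_cast
            ring)).comp
          (LinearMap.proj (pairFS (V.toLeft ∪ V.toRight.toLeft) V.toRight.toRight)))
    else 0

/-- The explicit map `tX → t³X` sending an element `x` of the summand indexed by `T` to
the sum over all ordered triples `(S₁, S₂, S₃)` of pairwise disjoint subsets with
`S₁ ∪ S₂ ∪ S₃ = T` of `(-1)^e x` placed in the summand indexed by `(S₁, S₂, S₃)`, where
the exponent `e = e S₁ S₂ S₃` is a given function of the triple. -/
noncomputable def tripleXi (X : Cube R ι) (e : Finset ι → Finset ι → Finset ι → ℕ) (k : ℤ) :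
    tOb X k →ₗ[R] tOb X.trpl k :=
  LinearMap.pi fun V =>
    if h : Disjoint V.toLeft V.toRight.toLeft ∧ Disjoint V.toLeft V.toRight.toRight ∧
        Disjoint V.toRight.toLeft V.toRight.toRight then
      ((-1 : R) ^ e V.toLeft V.toRight.toLeft V.toRight.toRight) •
        ((X.cast rfl
          (show k + (((V.toLeft ∪ V.toRight.toLeft ∪ V.toRight.toRight) : Finset ι).card : ℤ) =
              k + V.card by
            rw [Finset.card_union_of_disjoint (Finset.disjoint_union_left.mpr ⟨h.2.1, h.2.2⟩),
              Finset.card_union_of_disjoint h.1,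
              ← Finset.card_toLeft_add_card_toRight (u := V),
              ← Finset.card_toLeft_add_card_toRight (u := V.toRight)]
            push_cast
            ring)).comp
          (LinearMap.proj (V.toLeft ∪ V.toRight.toLeft ∪ V.toRight.toRight)))
    else 0

end Triple

/-! Evaluated at a triple `(S₁, S₂, S₃)`, each composite picks up `x` from the summand
`S₁ ∪ S₂ ∪ S₃` multiplied by the product of the two signs it meets. Since `sgn2` is additive in
each argument over disjoint unions, both exponents equal
`sgn(S₁,S₂) + sgn(S₁,S₃) + sgn(S₂,S₃)`. -/

theorem Cube.cast_cast_s12 {ι : Type} [DecidableEq ι] (X : Cube R ι) {S T U : Finset ι} {a b c : ℤ}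
    (h₁ : S = T) (h₂ : a = b) (h₃ : T = U) (h₄ : b = c) (x : X.ob S a) :
    X.cast h₃ h₄ (X.cast h₁ h₂ x) = X.cast (h₁.trans h₃) (h₂.trans h₄) x := by
  subst h₁ h₂ h₃ h₄
  rfl

theorem card_toLeft_union_toRight_union_toRight_toRight {α : Type} [DecidableEq α]
    {V : Finset (α ⊕ α ⊕ α)} (h₁₂ : Disjoint V.toLeft V.toRight.toLeft)
    (h₁₃ : Disjoint V.toLeft V.toRight.toRight)
    (h₂₃ : Disjoint V.toRight.toLeft V.toRight.toRight) :
    (V.toLeft ∪ V.toRight.toLeft ∪ V.toRight.toRight).card = V.card := by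
  rw [Finset.union_assoc, Finset.card_union_of_disjoint
      (Finset.disjoint_union_right.mpr ⟨h₁₂, h₁₃⟩), Finset.card_union_of_disjoint h₂₃,
    ← Finset.card_toLeft_add_card_toRight (u := V),
    ← Finset.card_toLeft_add_card_toRight (u := V.toRight)]

section TripleXi

variable {ι : Type} [DecidableEq ι] (X : Cube R ι) {k : ℤ}
  (e : Finset ι → Finset ι → Finset ι → ℕ)

-- The transport equalities are hypotheses: any two proofs of them agree, so callers need not
-- reproduce the proofs inside the definitions.
theorem tripleXi_apply_of_disjoint (x : tOb X k) {V : Finset (ι ⊕ ι ⊕ ι)}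
    (h : Disjoint V.toLeft V.toRight.toLeft ∧
      Disjoint V.toLeft V.toRight.toRight ∧ Disjoint V.toRight.toLeft V.toRight.toRight)
    (hk : k + ((V.toLeft ∪ V.toRight.toLeft ∪ V.toRight.toRight).card : ℤ) = k + V.card) :
    tripleXi X e k x V = (-1 : R) ^ e V.toLeft V.toRight.toLeft V.toRight.toRight •
      X.cast rfl hk (x (V.toLeft ∪ V.toRight.toLeft ∪ V.toRight.toRight)) := by
  simp only [tripleXi, LinearMap.pi_apply, dif_pos h]
  rfl

theorem tripleXi_apply_of_not_disjoint (x : tOb X k) {V : Finset (ι ⊕ ι ⊕ ι)}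
    (h : ¬(Disjoint V.toLeft V.toRight.toLeft ∧
      Disjoint V.toLeft V.toRight.toRight ∧ Disjoint V.toRight.toLeft V.toRight.toRight)) :
    tripleXi X e k x V = 0 := by
  simp only [tripleXi, LinearMap.pi_apply, dif_neg h]
  rfl

theorem tripleXi_congr {e' : Finset ι → Finset ι → Finset ι → ℕ}
    (he : ∀ S₁ S₂ S₃, Disjoint S₁ S₂ → Disjoint S₁ S₃ → Disjoint S₂ S₃ →
      e S₁ S₂ S₃ = e' S₁ S₂ S₃) :
    tripleXi X e k = tripleXi X e' k := by
  ext x V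
  by_cases h : Disjoint V.toLeft V.toRight.toLeft ∧
      Disjoint V.toLeft V.toRight.toRight ∧ Disjoint V.toRight.toLeft V.toRight.toRight
  · have hk := congrArg (k + ·) (congrArg Nat.cast
      (card_toLeft_union_toRight_union_toRight_toRight h.1 h.2.1 h.2.2))
    rw [tripleXi_apply_of_disjoint X e x h hk, tripleXi_apply_of_disjoint X e' x h hk,
      he _ _ _ h.1 h.2.1 h.2.2]
  · rw [tripleXi_apply_of_not_disjoint X e x h, tripleXi_apply_of_not_disjoint X e' x h]

end TripleXi

section Sign

variable {ι : Type} [DecidableEq ι] [LinearOrder ι]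

theorem sgn2_union_left {S S' : Finset ι} (T : Finset ι) (h : Disjoint S S') :
    sgn2 (S ∪ S') T = sgn2 S T + sgn2 S' T := by
  rw [sgn2, sgn2, sgn2, Finset.product_union, Finset.filter_union,
    Finset.card_union_of_disjoint ((Finset.disjoint_product.mpr (.inr h)).mono
      (Finset.filter_subset _ _) (Finset.filter_subset _ _))]

theorem sgn2_union_right (S : Finset ι) {T T' : Finset ι} (h : Disjoint T T') :
    sgn2 S (T ∪ T') = sgn2 S T + sgn2 S T' := by
  rw [sgn2, sgn2, sgn2, Finset.union_product, Finset.filter_union,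
    Finset.card_union_of_disjoint ((Finset.disjoint_product.mpr (.inl h)).mono
      (Finset.filter_subset _ _) (Finset.filter_subset _ _))]

theorem sgn2_add_sgn2_union_left {S₁ S₂ S₃ : Finset ι} (h₁₂ : Disjoint S₁ S₂)
    (h₂₃ : Disjoint S₂ S₃) :
    sgn2 S₁ S₂ + sgn2 (S₁ ∪ S₂) S₃ = sgn2 S₂ S₃ + sgn2 S₁ (S₂ ∪ S₃) := by
  rw [sgn2_union_left _ h₁₂, sgn2_union_right _ h₂₃]
  ring

end Sign

section Xi

variable {ι : Type} [DecidableEq ι] [LinearOrder ι] (X : Cube R ι) {k : ℤ}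

theorem xiMap_apply_pairFS (x : tOb X k) {U W : Finset ι} (h : Disjoint U W) {S : Finset ι}
    (hS : S = (pairFS U W).toLeft ∪ (pairFS U W).toRight)
    (hk : k + (S.card : ℤ) = k + (pairFS U W).card) :
    xiMap X k x (pairFS U W) = (-1 : R) ^ sgn2 U W • X.cast hS hk (x S) := by
  subst hS
  simp only [xiMap, LinearMap.pi_apply, pairFS_toLeft, pairFS_toRight, dif_pos h]
  rfl

theorem xiMap_apply_of_not_disjoint (x : tOb X k) {W : Finset (ι ⊕ ι)}
    (h : ¬Disjoint W.toLeft W.toRight) : xiMap X k x W = 0 := by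
  simp only [xiMap, LinearMap.pi_apply, dif_neg h]
  rfl

theorem tXi_apply_of_disjoint (y : tOb X.dbl k) {V : Finset (ι ⊕ ι ⊕ ι)}
    (h : Disjoint V.toRight.toLeft V.toRight.toRight)
    (hS : (pairFS V.toLeft (V.toRight.toLeft ∪ V.toRight.toRight)).toLeft ∪
      (pairFS V.toLeft (V.toRight.toLeft ∪ V.toRight.toRight)).toRight =
        V.toLeft ∪ V.toRight.toLeft ∪ V.toRight.toRight)
    (hk : k + ((pairFS V.toLeft (V.toRight.toLeft ∪ V.toRight.toRight)).card : ℤ) =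
      k + V.card) :
    tXi X k y V = (-1 : R) ^ sgn2 V.toRight.toLeft V.toRight.toRight •
      X.cast hS hk (y (pairFS V.toLeft (V.toRight.toLeft ∪ V.toRight.toRight))) := by
  simp only [tXi, LinearMap.pi_apply, dif_pos h]
  rfl

theorem tXi_apply_eq_zero (y : tOb X.dbl k) {V : Finset (ι ⊕ ι ⊕ ι)}
    (hy : Disjoint V.toRight.toLeft V.toRight.toRight →
      y (pairFS V.toLeft (V.toRight.toLeft ∪ V.toRight.toRight)) = 0) :
    tXi X k y V = 0 := by
  simp only [tXi, LinearMap.pi_apply]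
  split_ifs with h
  · erw [LinearMap.smul_apply, LinearMap.comp_apply, LinearMap.proj_apply, hy h, map_zero,
      smul_zero]
    rfl
  · rfl

theorem xiT_apply_of_disjoint (y : tOb X.dbl k) {V : Finset (ι ⊕ ι ⊕ ι)}
    (h : Disjoint V.toLeft V.toRight.toLeft)
    (hS : (pairFS (V.toLeft ∪ V.toRight.toLeft) V.toRight.toRight).toLeft ∪
      (pairFS (V.toLeft ∪ V.toRight.toLeft) V.toRight.toRight).toRight =
        V.toLeft ∪ V.toRight.toLeft ∪ V.toRight.toRight)
    (hk : k + ((pairFS (V.toLeft ∪ V.toRight.toLeft) V.toRight.toRight).card : ℤ) =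
      k + V.card) :
    xiT X k y V = (-1 : R) ^ sgn2 V.toLeft V.toRight.toLeft •
      X.cast hS hk (y (pairFS (V.toLeft ∪ V.toRight.toLeft) V.toRight.toRight)) := by
  simp only [xiT, LinearMap.pi_apply, dif_pos h]
  rfl

theorem xiT_apply_eq_zero (y : tOb X.dbl k) {V : Finset (ι ⊕ ι ⊕ ι)}
    (hy : Disjoint V.toLeft V.toRight.toLeft →
      y (pairFS (V.toLeft ∪ V.toRight.toLeft) V.toRight.toRight) = 0) :
    xiT X k y V = 0 := by
  simp only [xiT, LinearMap.pi_apply]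
  split_ifs with h
  · erw [LinearMap.smul_apply, LinearMap.comp_apply, LinearMap.proj_apply, hy h, map_zero,
      smul_zero]
    rfl
  · rfl

theorem tXi_comp_xiMap (k : ℤ) :
    (tXi X k).comp (xiMap X k) =
      tripleXi X (fun S₁ S₂ S₃ => sgn2 S₂ S₃ + sgn2 S₁ (S₂ ∪ S₃)) k := by
  ext x V
  rw [LinearMap.comp_apply]
  by_cases h : Disjoint V.toLeft V.toRight.toLeft ∧ Disjoint V.toLeft V.toRight.toRight ∧
      Disjoint V.toRight.toLeft V.toRight.toRight
  · obtain ⟨h₁₂, h₁₃, h₂₃⟩ := h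
    have h₁₂₃ := Finset.disjoint_union_right.mpr ⟨h₁₂, h₁₃⟩
    have hcard := card_toLeft_union_toRight_union_toRight_toRight h₁₂ h₁₃ h₂₃
    have hpair : (pairFS V.toLeft (V.toRight.toLeft ∪ V.toRight.toRight)).card = V.card := by
      rw [pairFS_card, ← hcard, Finset.union_assoc, Finset.card_union_of_disjoint h₁₂₃]
    rw [tXi_apply_of_disjoint X _ h₂₃
        (by rw [pairFS_toLeft, pairFS_toRight, Finset.union_assoc]) (by rw [hpair]),
      xiMap_apply_pairFS X x h₁₂₃ (S := V.toLeft ∪ V.toRight.toLeft ∪ V.toRight.toRight)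
        (by rw [pairFS_toLeft, pairFS_toRight, Finset.union_assoc]) (by rw [hpair, hcard]),
      map_smul, Cube.cast_cast_s12, smul_smul, ← pow_add,
      tripleXi_apply_of_disjoint X _ x ⟨h₁₂, h₁₃, h₂₃⟩ (by rw [hcard])]
  · rw [tripleXi_apply_of_not_disjoint X _ x h]
    refine tXi_apply_eq_zero X _ fun h₂₃ => xiMap_apply_of_not_disjoint X x ?_
    rw [pairFS_toLeft, pairFS_toRight, Finset.disjoint_union_right]
    exact fun ⟨h₁₂, h₁₃⟩ => h ⟨h₁₂, h₁₃, h₂₃⟩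

theorem xiT_comp_xiMap (k : ℤ) :
    (xiT X k).comp (xiMap X k) =
      tripleXi X (fun S₁ S₂ S₃ => sgn2 S₁ S₂ + sgn2 (S₁ ∪ S₂) S₃) k := by
  ext x V
  rw [LinearMap.comp_apply]
  by_cases h : Disjoint V.toLeft V.toRight.toLeft ∧ Disjoint V.toLeft V.toRight.toRight ∧
      Disjoint V.toRight.toLeft V.toRight.toRight
  · obtain ⟨h₁₂, h₁₃, h₂₃⟩ := h
    have h₁₂₃ := Finset.disjoint_union_left.mpr ⟨h₁₃, h₂₃⟩
    have hcard := card_toLeft_union_toRight_union_toRight_toRight h₁₂ h₁₃ h₂₃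
    have hpair : (pairFS (V.toLeft ∪ V.toRight.toLeft) V.toRight.toRight).card = V.card := by
      rw [pairFS_card, ← hcard, Finset.card_union_of_disjoint h₁₂₃]
    rw [xiT_apply_of_disjoint X _ h₁₂
        (by rw [pairFS_toLeft, pairFS_toRight]) (by rw [hpair]),
      xiMap_apply_pairFS X x h₁₂₃ (S := V.toLeft ∪ V.toRight.toLeft ∪ V.toRight.toRight)
        (by rw [pairFS_toLeft, pairFS_toRight]) (by rw [hpair, hcard]),
      map_smul, Cube.cast_cast_s12, smul_smul, ← pow_add,
      tripleXi_apply_of_disjoint X _ x ⟨h₁₂, h₁₃, h₂₃⟩ (by rw [hcard])]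
  · rw [tripleXi_apply_of_not_disjoint X _ x h]
    refine xiT_apply_eq_zero X _ fun h₁₂ => xiMap_apply_of_not_disjoint X x ?_
    rw [pairFS_toLeft, pairFS_toRight, Finset.disjoint_union_left]
    exact fun ⟨h₁₃, h₂₃⟩ => h ⟨h₁₂, h₁₃, h₂₃⟩

end Xi

theorem stmt_12_general (n : ℕ) (X : Cube R (Fin n)) :
    ∀ k,
      (tXi X k).comp (xiMap X k) =
        tripleXi X (fun S₁ S₂ S₃ => sgn2 S₁ S₂ + sgn2 (S₁ ∪ S₂) S₃) k ∧
      (xiT X k).comp (xiMap X k) =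
        tripleXi X (fun S₁ S₂ S₃ => sgn2 S₁ S₂ + sgn2 (S₁ ∪ S₂) S₃) k ∧
      tripleXi X (fun S₁ S₂ S₃ => sgn2 S₁ S₂ + sgn2 (S₁ ∪ S₂) S₃) k =
        tripleXi X (fun S₁ S₂ S₃ => sgn2 S₂ S₃ + sgn2 S₁ (S₂ ∪ S₃)) k := by
  intro k
  have hsign : tripleXi X (fun S₁ S₂ S₃ => sgn2 S₁ S₂ + sgn2 (S₁ ∪ S₂) S₃) k =
      tripleXi X (fun S₁ S₂ S₃ => sgn2 S₂ S₃ + sgn2 S₁ (S₂ ∪ S₃)) k :=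
    tripleXi_congr X _ fun _ _ _ h₁₂ _ h₂₃ => sgn2_add_sgn2_union_left h₁₂ h₂₃
  exact ⟨(tXi_comp_xiMap X k).trans hsign.symm, xiT_comp_xiMap X k, hsign⟩

/-- for any `n`-cube `X` of chain complexes of `R`-modules, the two composites
`tξ ∘ ξ` and `ξ_t ∘ ξ : tX → t³X` are equal; explicitly, both send an element `x` of the
summand indexed by `T` to the sum over all ordered triples `(S₁, S₂, S₃)` of pairwise
disjoint subsets with `S₁ ∪ S₂ ∪ S₃ = T` of
`(-1)^{sgn(S₁,S₂) + sgn(S₁∪S₂,S₃)} x = (-1)^{sgn(S₂,S₃) + sgn(S₁,S₂∪S₃)} x` placed in the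
summand indexed by `(S₁, S₂, S₃)`. -/
theorem stmt_12 (n : ℕ) (X : Cube R (Fin n)) (h1 : X.IsComplex) (h2 : X.MapsAreChain)
    (h3 : X.IsFunctorial) :
    ∀ k,
      (tXi X k).comp (xiMap X k) =
        tripleXi X (fun S₁ S₂ S₃ => sgn2 S₁ S₂ + sgn2 (S₁ ∪ S₂) S₃) k ∧
      (xiT X k).comp (xiMap X k) =
        tripleXi X (fun S₁ S₂ S₃ => sgn2 S₁ S₂ + sgn2 (S₁ ∪ S₂) S₃) k ∧
      tripleXi X (fun S₁ S₂ S₃ => sgn2 S₁ S₂ + sgn2 (S₁ ∪ S₂) S₃) k =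
        tripleXi X (fun S₁ S₂ S₃ => sgn2 S₂ S₃ + sgn2 S₁ (S₂ ∪ S₃)) k :=
  stmt_12_general n X
end T
end
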